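/- arXiv:2202.03321 — 2 statements merged into one kernel-verified Lean document; each statement's English description precedes it below -/
import Mathlib

section
/- Let m, n ≥ 1 and let ρ be a density matrix on ℂ^m⊗ℂ^n admitting a pure-state decomposition ρ = Σ_k λ_k · ψ_k ψ_kᴴ, where each λ_k > 0, Σ_k λ_k = 1, and each ψ_k : Fin m × Fin n → ℂ is a unit vector. If the minimal eigenvalue of ρ^{T_A} equals −1/2, then for every index k the minimal eigenvalue of (ψ_k ψ_kᴴ)^{T_A} equals −1/2. -/
open Matrix Polynomial
open scoped ComplexOrder

noncomputable section

/-- Partial transpose on subsystem A of a bipartite matrix. -/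
def ptA {m n : ℕ} (ρ : Matrix (Fin m × Fin n) (Fin m × Fin n) ℂ) :
    Matrix (Fin m × Fin n) (Fin m × Fin n) ℂ :=
  fun p q => ρ (q.1, p.2) (p.1, q.2)

/-- A density matrix: positive semidefinite with trace one. -/
def IsDensityMatrix {k : Type*} [Fintype k] [DecidableEq k] (ρ : Matrix k k ℂ) : Prop :=
  ρ.PosSemidef ∧ ρ.trace = 1

open Classical in
/-- Minimal (real) eigenvalue of a Hermitian matrix (junk value 0 otherwise). -/
noncomputable def minEig {k : Type*} [Fintype k] [DecidableEq k] (A : Matrix k k ℂ) : ℝ :=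
  if h : A.IsHermitian then ⨅ i, h.eigenvalues i else 0

/-- The rank-one projection |ψ⟩⟨ψ| of a vector ψ. -/
def proj {k : Type*} [Fintype k] (ψ : k → ℂ) : Matrix k k ℂ :=
  Matrix.vecMulVec ψ (star ψ)

/-- A unit vector. -/
def IsUnitVec {k : Type*} [Fintype k] (ψ : k → ℂ) : Prop :=
  ∑ p, ‖ψ p‖ ^ 2 = 1

/-- Reduced matrix on subsystem A of a pure state ψ. -/
def reducedA {n : ℕ} (ψ : Fin n × Fin n → ℂ) : Matrix (Fin n) (Fin n) ℂ :=
  fun i k => ∑ j, ψ (i, j) * (starRingEnd ℂ) (ψ (k, j))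

/-- ψ is maximally entangled iff its reduced matrix is (1/n)·identity. -/
def MaxEntangled {n : ℕ} (ψ : Fin n × Fin n → ℂ) : Prop :=
  reducedA ψ = ((n : ℂ))⁻¹ • (1 : Matrix (Fin n) (Fin n) ℂ)

/-!
For a pure state `ψ` let `Φ` be the `m × n` matrix of conjugated amplitudes and `V` the matrix of
an eigenvector of `(ψψᴴ)^{T_A}` with eigenvalue `μ`. The eigen-equation reads `Φ K = μ V` with
`K = (Φᴴ V)ᵀ`, hence `L K = μ Kᵀ` for the density matrix `L = Φᴴ Φ`. In an eigenbasis of `L`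
this becomes `d_a K_ab = μ K_ba`, so either `μ = d_a ≥ 0` or `μ² = d_a d_b ≤ 1/4`: the partial
transpose of a pure state has no eigenvalue below `-1/2`.

The minimal eigenvalue is superadditive on nonnegative combinations (`A - λ_min(A) • 1` is
positive semidefinite), so `-1/2 = λ_min(ρ^{T_A}) ≥ ∑ λ_k λ_min((ψ_k ψ_kᴴ)^{T_A}) ≥ -1/2`, and
since all `λ_k > 0` every term attains the bound.
-/
section MinEig

open scoped Pointwise

variable {ι : Type*} [Fintype ι] [DecidableEq ι] {A : Matrix ι ι ℂ}

lemma minEig_eq_iInf (hA : A.IsHermitian) : minEig A = ⨅ i, hA.eigenvalues i := dif_pos hA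

lemma le_minEig_iff [Nonempty ι] (hA : A.IsHermitian) {c : ℝ} :
    c ≤ minEig A ↔ ∀ i, c ≤ hA.eigenvalues i := by
  rw [minEig_eq_iInf hA, le_ciInf_iff (Set.finite_range _).bddBelow]

lemma posSemidef_sub_smul_one_iff_le_minEig [Nonempty ι] (hA : A.IsHermitian) (c : ℝ) :
    (A - c • 1).PosSemidef ↔ c ≤ minEig A := by
  have hB : (A - c • 1).IsHermitian := hA.sub ((IsSelfAdjoint.all c).smul isHermitian_one)
  have hspec : Set.range hB.eigenvalues = (· - c) '' Set.range hA.eigenvalues := by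
    have : spectrum ℝ (A - c • 1) = spectrum ℝ A - ({c} : Set ℝ) := by
      rw [← Algebra.algebraMap_eq_smul_one, spectrum.sub_singleton_eq]
    rw [← hB.spectrum_real_eq_range_eigenvalues, ← hA.spectrum_real_eq_range_eigenvalues, this,
      Set.sub_singleton]
  rw [hB.posSemidef_iff_eigenvalues_nonneg, le_minEig_iff hA, Pi.le_def]
  simp only [Pi.zero_apply]
  constructor
  · intro h i
    obtain ⟨j, hj⟩ : hA.eigenvalues i - c ∈ Set.range hB.eigenvalues := hspec ▸ ⟨_, ⟨i, rfl⟩, rfl⟩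
    linarith [h j]
  · intro h j
    obtain ⟨_, ⟨i, rfl⟩, hi⟩ : hB.eigenvalues j ∈ (· - c) '' Set.range hA.eigenvalues :=
      hspec ▸ ⟨j, rfl⟩
    rw [← hi, sub_nonneg]
    exact h i

lemma le_minEig_of_forall_mulVec_eq_smul [Nonempty ι] (hA : A.IsHermitian) {c : ℝ}
    (h : ∀ (μ : ℝ) (v : ι → ℂ), v ≠ 0 → A *ᵥ v = μ • v → c ≤ μ) : c ≤ minEig A :=
  (le_minEig_iff hA).2 fun i => h _ _
    ((WithLp.ofLp_eq_zero 2).ne.2 <| hA.eigenvectorBasis.orthonormal.ne_zero i)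
    (hA.mulVec_eigenvectorBasis i)

lemma sum_mul_minEig_le_minEig_sum [Nonempty ι] {κ : Type*} [Fintype κ]
    {A : κ → Matrix ι ι ℂ} (hA : ∀ k, (A k).IsHermitian) {w : κ → ℝ} (hw : ∀ k, 0 ≤ w k) :
    ∑ k, w k * minEig (A k) ≤ minEig (∑ k, w k • A k) := by
  have hsum : (∑ k, w k • A k).IsHermitian :=
    isSelfAdjoint_sum _ fun k _ => (IsSelfAdjoint.all (w k)).smul (hA k)
  rw [← posSemidef_sub_smul_one_iff_le_minEig hsum]
  have hsplit : ∑ k, w k • A k - (∑ k, w k * minEig (A k)) • (1 : Matrix ι ι ℂ) =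
      ∑ k, w k • (A k - minEig (A k) • 1) := by
    simp only [smul_sub, Finset.sum_sub_distrib, Finset.sum_smul, mul_smul]
  rw [hsplit]
  exact posSemidef_sum _ fun k _ =>
    ((posSemidef_sub_smul_one_iff_le_minEig (hA k) _).2 le_rfl).smul (hw k)

end MinEig

section TransposeEquation

variable {ι : Type*} [Fintype ι] [DecidableEq ι]

lemma neg_half_le_of_diagonal_mul_eq_smul_transpose {d : ι → ℝ} (hd : ∀ i, 0 ≤ d i)
    (hsum : ∑ i, d i ≤ 1) {K : Matrix ι ι ℂ} (hK : K ≠ 0) {μ : ℝ}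
    (h : diagonal (fun i => (d i : ℂ)) * K = (μ : ℂ) • Kᵀ) : -(1 / 2) ≤ μ := by
  have hentry : ∀ a b, (d a : ℂ) * K a b = μ * K b a := fun a b => by
    simpa [diagonal_mul] using congrFun (congrFun h a) b
  obtain ⟨a, b, hab⟩ : ∃ a b, K a b ≠ 0 := by
    by_contra! h0
    exact hK (Matrix.ext h0)
  rcases eq_or_ne a b with rfl | hne
  · have hμ : (d a : ℂ) = μ := mul_right_cancel₀ hab (hentry a a)
    have := hd a
    norm_cast at hμ
    linarith
  · have hprod : (d a : ℂ) * d b = (μ : ℂ) ^ 2 := by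
      refine mul_right_cancel₀ hab ?_
      linear_combination (d b : ℂ) * hentry a b + (μ : ℂ) * hentry b a
    norm_cast at hprod
    have hpair : d a + d b ≤ 1 := by
      rw [← Finset.sum_pair hne]
      exact (Finset.sum_le_univ_sum_of_nonneg hd).trans hsum
    nlinarith [hd a, hd b, sq_nonneg (d a - d b)]

lemma neg_half_le_of_mul_eq_smul_transpose {L K : Matrix ι ι ℂ} (hL : L.PosSemidef)
    (htr : L.trace = 1) (hK : K ≠ 0) {μ : ℝ} (h : L * K = (μ : ℂ) • Kᵀ) : -(1 / 2) ≤ μ := by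
  set W : Matrix ι ι ℂ := ((star hL.1.eigenvectorUnitary : unitaryGroup ι ℂ) : Matrix ι ι ℂ)
  have hWW : star W * W = 1 := Unitary.coe_star_mul_self _
  have hdiag : W * L * star W = diagonal (fun i => (hL.1.eigenvalues i : ℂ)) :=
    hL.1.conjStarAlgAut_star_eigenvectorUnitary
  refine neg_half_le_of_diagonal_mul_eq_smul_transpose (K := W * K * Wᵀ) hL.eigenvalues_nonneg
    ?_ ?_ ?_
  · have htr' := hL.1.trace_eq_sum_eigenvalues
    rw [htr, ← RCLike.ofReal_sum, ← RCLike.ofReal_one, RCLike.ofReal_inj] at htr'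
    exact htr'.symm.le
  · intro h0
    apply hK
    calc K = star W * (W * K * Wᵀ) * (star W)ᵀ := by
          rw [← Matrix.mul_assoc, ← Matrix.mul_assoc, hWW, Matrix.one_mul,
            Matrix.mul_assoc, ← transpose_mul, hWW, transpose_one, Matrix.mul_one]
      _ = 0 := by rw [h0, Matrix.mul_zero, Matrix.zero_mul]
  · rw [← hdiag]
    calc W * L * star W * (W * K * Wᵀ) = W * (L * K) * Wᵀ := by
          simp only [Matrix.mul_assoc]
          rw [← Matrix.mul_assoc (star W), hWW, Matrix.one_mul]
      _ = (μ : ℂ) • (W * K * Wᵀ)ᵀ := by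
          rw [h, transpose_mul, transpose_mul, transpose_transpose, Matrix.mul_smul,
            Matrix.smul_mul, Matrix.mul_assoc]

end TransposeEquation

section PartialTranspose

variable {m n : ℕ}

lemma isHermitian_ptA {ρ : Matrix (Fin m × Fin n) (Fin m × Fin n) ℂ} (hρ : ρ.IsHermitian) :
    (ptA ρ).IsHermitian :=
  Matrix.ext fun _ _ => hρ.apply _ _

lemma isHermitian_proj {k : Type*} [Fintype k] (ψ : k → ℂ) : (proj ψ).IsHermitian := by
  ext p q
  simp [proj, vecMulVec_apply, mul_comm]

lemma ptA_sum_smul {κ : Type*} [Fintype κ] (w : κ → ℝ)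
    (ρ : κ → Matrix (Fin m × Fin n) (Fin m × Fin n) ℂ) :
    ptA (∑ k, (w k : ℂ) • ρ k) = ∑ k, w k • ptA (ρ k) := by
  ext p q
  simp [ptA, Matrix.sum_apply, Complex.real_smul]

lemma neg_half_le_of_ptA_proj_mulVec_eq_smul {ψ : Fin m × Fin n → ℂ} (hψ : IsUnitVec ψ)
    {μ : ℝ} {v : Fin m × Fin n → ℂ} (hv : v ≠ 0) (h : ptA (proj ψ) *ᵥ v = μ • v) :
    -(1 / 2) ≤ μ := by
  rcases le_or_gt 0 μ with hμ | hμ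
  · linarith
  set Φ : Matrix (Fin m) (Fin n) ℂ := of fun i j => star (ψ (i, j))
  set V : Matrix (Fin m) (Fin n) ℂ := of fun i j => v (i, j)
  set K : Matrix (Fin n) (Fin n) ℂ := (Φᴴ * V)ᵀ
  have hΦK : Φ * K = (μ : ℂ) • V := by
    ext i j
    have := congrFun h (i, j)
    simp only [ptA, proj, mulVec, dotProduct, Fintype.sum_prod_type, vecMulVec_apply,
      Pi.star_apply, Pi.smul_apply, Complex.real_smul] at this
    simp only [Φ, V, K, mul_apply, transpose_apply, conjTranspose_apply, of_apply, star_star,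
      Matrix.smul_apply, smul_eq_mul, ← this, Finset.mul_sum]
    rw [Finset.sum_comm]
    exact Finset.sum_congr rfl fun _ _ => Finset.sum_congr rfl fun _ _ => by ring
  have hK : K ≠ 0 := by
    intro h0
    rw [h0, Matrix.mul_zero, eq_comm, smul_eq_zero] at hΦK
    refine hv (funext fun p => ?_)
    rcases hΦK with hμ0 | hV
    · exact absurd hμ0 (by exact_mod_cast hμ.ne)
    · exact congrFun (congrFun hV p.1) p.2
  refine neg_half_le_of_mul_eq_smul_transpose (posSemidef_conjTranspose_mul_self Φ) ?_ hK ?_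
  · simp only [trace, diag, mul_apply, conjTranspose_apply, Φ, of_apply, star_star]
    simp only [Complex.star_def, Complex.mul_conj', ← Complex.ofReal_pow, ← Complex.ofReal_sum]
    rw [Finset.sum_comm, ← Fintype.sum_prod_type', hψ, Complex.ofReal_one]
  · rw [Matrix.mul_assoc, hΦK, Matrix.mul_smul, transpose_transpose]

lemma neg_half_le_minEig_ptA_proj [Nonempty (Fin m)] [Nonempty (Fin n)]
    {ψ : Fin m × Fin n → ℂ} (hψ : IsUnitVec ψ) : -(1 / 2) ≤ minEig (ptA (proj ψ)) :=
  le_minEig_of_forall_mulVec_eq_smul (isHermitian_ptA (isHermitian_proj ψ))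
    fun _ _ hv h => neg_half_le_of_ptA_proj_mulVec_eq_smul hψ hv h

end PartialTranspose

lemma eq_of_sum_mul_le_of_forall_le {κ : Type*} [Fintype κ] {w μ : κ → ℝ} {c : ℝ}
    (hw : ∀ k, 0 < w k) (hw1 : ∑ k, w k = 1) (hle : ∀ k, c ≤ μ k)
    (hsum : ∑ k, w k * μ k ≤ c) (k : κ) : μ k = c := by
  have hmono : ∀ k ∈ Finset.univ, w k * c ≤ w k * μ k := fun k _ =>
    mul_le_mul_of_nonneg_left (hle k) (hw k).le
  have heq : ∑ k, w k * c = ∑ k, w k * μ k := by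
    refine le_antisymm (Finset.sum_le_sum hmono) ?_
    rwa [← Finset.sum_mul, hw1, one_mul]
  exact (mul_left_cancel₀ (hw k).ne' ((Finset.sum_eq_sum_iff_of_le hmono).1 heq k
    (Finset.mem_univ k))).symm

theorem stmt1_general (m n N : ℕ) (hm : 1 ≤ m) (hn : 1 ≤ n)
    (ρ : Matrix (Fin m × Fin n) (Fin m × Fin n) ℂ)
    (lam : Fin N → ℝ) (ψ : Fin N → (Fin m × Fin n → ℂ))
    (hlam : ∀ k, 0 < lam k) (hsum : ∑ k, lam k = 1)
    (hψ : ∀ k, IsUnitVec (ψ k))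
    (hdecomp : ρ = ∑ k, (lam k : ℂ) • proj (ψ k))
    (hmin : minEig (ptA ρ) = -(1/2)) :
    ∀ k, minEig (ptA (proj (ψ k))) = -(1/2) := by
  have : Nonempty (Fin m) := Fin.pos_iff_nonempty.mp hm
  have : Nonempty (Fin n) := Fin.pos_iff_nonempty.mp hn
  have hmix : ∑ k, lam k * minEig (ptA (proj (ψ k))) ≤ -(1 / 2) := by
    rw [← hmin, hdecomp, ptA_sum_smul]
    exact sum_mul_minEig_le_minEig_sum (fun _ => isHermitian_ptA (isHermitian_proj _))
      fun k => (hlam k).le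
  exact eq_of_sum_mul_le_of_forall_le hlam hsum (fun k => neg_half_le_minEig_ptA_proj (hψ k)) hmix

theorem stmt1 (m n N : ℕ) (hm : 1 ≤ m) (hn : 1 ≤ n)
    (ρ : Matrix (Fin m × Fin n) (Fin m × Fin n) ℂ) (hρ : IsDensityMatrix ρ)
    (lam : Fin N → ℝ) (ψ : Fin N → (Fin m × Fin n → ℂ))
    (hlam : ∀ k, 0 < lam k) (hsum : ∑ k, lam k = 1)
    (hψ : ∀ k, IsUnitVec (ψ k))
    (hdecomp : ρ = ∑ k, (lam k : ℂ) • proj (ψ k))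
    (hmin : minEig (ptA ρ) = -(1/2)) :
    ∀ k, minEig (ptA (proj (ψ k))) = -(1/2) :=
  stmt1_general m n N hm hn ρ lam ψ hlam hsum hψ hdecomp hmin
end
end

section
/- Let ρ be a density matrix on ℂ²⊗ℂ² (a two-qubit state). Then the following are equivalent: (i) the PT-moments of ρ satisfy Tr[ρ^{T_A}] = 1, Tr[(ρ^{T_A})²] = 1, Tr[(ρ^{T_A})³] = 1/4 and Tr[(ρ^{T_A})⁴] = 1/4; (ii) ρ is maximally entangled, i.e. ρ = ψψᴴ for some maximally entangled unit vector ψ : Fin 2 × Fin 2 → ℂ. -/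
open Matrix Polynomial
open scoped ComplexOrder

noncomputable section

/-!
Partial transposition only permutes the entries of `ρ`, so `p₂ = Tr ρ²`, and `p₂ = 1` forces the
density matrix `ρ` to be pure, `ρ = ψψᴴ`. For a pure state with coefficient matrix `M`
(`ψ (i, j) = M i j`) the square of the partial transpose is `(MMᴴ ⊗ MᴴM)ᵀ`; hence `p₃ = Tr R³`
and `p₄ = (Tr R²)²` for the reduced matrix `R = MMᴴ`. The eigenvalues `μ` of `R` are nonnegative
with sum `1`, and `∑ (μ - 1/n)² (μ + 2/n) = Tr R³ - 1/n²`, so `p₃ = 1/n²` exactly when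
`R = 1/n • 1`.
-/

open scoped Kronecker

section EigenvalueBounds

variable {k : Type*} [Fintype k] {μ : k → ℝ}

theorem exists_eq_single_of_sum_eq_one_of_sum_sq_eq_one [DecidableEq k] (hμ : ∀ i, 0 ≤ μ i)
    (h1 : ∑ i, μ i = 1) (h2 : ∑ i, μ i ^ 2 = 1) : ∃ i₀, μ = Pi.single i₀ 1 := by
  have hle : ∀ i, μ i ≤ 1 := fun i =>
    h1 ▸ Finset.single_le_sum (fun j _ => hμ j) (Finset.mem_univ i)
  have hidem : ∀ i, μ i * (1 - μ i) = 0 := by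
    have hsum : ∑ i, μ i * (1 - μ i) = 0 := by
      simp only [mul_sub, mul_one, ← sq, Finset.sum_sub_distrib, h1, h2, sub_self]
    exact fun i => (Finset.sum_eq_zero_iff_of_nonneg fun j _ =>
      mul_nonneg (hμ j) (sub_nonneg.2 (hle j))).1 hsum i (Finset.mem_univ i)
  obtain ⟨i₀, -, hi₀⟩ := Finset.exists_ne_zero_of_sum_ne_zero (h1.trans_ne one_ne_zero)
  have hμi₀ : μ i₀ = 1 := by linarith [(mul_eq_zero.1 (hidem i₀)).resolve_left hi₀]
  refine ⟨i₀, funext fun j => ?_⟩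
  rcases eq_or_ne j i₀ with rfl | hj
  · simp [hμi₀]
  · have hpair := Finset.add_le_sum (fun i _ => hμ i) (Finset.mem_univ i₀) (Finset.mem_univ j)
      hj.symm
    simp only [Pi.single_apply, hj, if_false]
    linarith [hμ j]

theorem eq_inv_card_of_sum_eq_one_of_sum_pow_three (hμ : ∀ i, 0 ≤ μ i)
    (h1 : ∑ i, μ i = 1) (h3 : ∑ i, μ i ^ 3 = ((Fintype.card k : ℝ) ^ 2)⁻¹) (i : k) :
    μ i = (Fintype.card k : ℝ)⁻¹ := by
  have hk : (Fintype.card k : ℝ) ≠ 0 := by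
    have : Nonempty k := by
      by_contra h
      simp [not_nonempty_iff.1 h] at h1
    exact Nat.cast_ne_zero.2 Fintype.card_ne_zero
  set c := (Fintype.card k : ℝ)⁻¹
  have hc : 0 < c := by positivity
  have hsum : ∑ i, (μ i - c) ^ 2 * (μ i + 2 * c) = 0 := by
    have hexpand : ∀ i, (μ i - c) ^ 2 * (μ i + 2 * c) = μ i ^ 3 - 3 * c ^ 2 * μ i + 2 * c ^ 3 :=
      fun i => by ring
    simp only [hexpand, Finset.sum_add_distrib, Finset.sum_sub_distrib, ← Finset.mul_sum, h1, h3,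
      Finset.sum_const, Finset.card_univ, nsmul_eq_mul, c]
    field_simp
    ring
  have hterm := (Finset.sum_eq_zero_iff_of_nonneg fun j _ =>
    mul_nonneg (sq_nonneg (μ j - c)) (by linarith [hμ j])).1 hsum i (Finset.mem_univ i)
  have hpos : μ i + 2 * c ≠ 0 := by linarith [hμ i]
  simpa [hpos, sub_eq_zero] using hterm

end EigenvalueBounds

namespace Matrix.IsHermitian

variable {k : Type*} [Fintype k] [DecidableEq k] {A : Matrix k k ℂ}

theorem trace_pow_eq_sum_eigenvalues_pow (hA : A.IsHermitian) (r : ℕ) :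
    (A ^ r).trace = ((∑ i, hA.eigenvalues i ^ r : ℝ) : ℂ) := by
  conv_lhs => rw [hA.spectral_theorem]
  rw [← map_pow, Unitary.conjStarAlgAut_apply, trace_mul_comm, ← Matrix.mul_assoc,
    Unitary.coe_star_mul_self, Matrix.one_mul, diagonal_pow, trace_diagonal]
  simp

end Matrix.IsHermitian

namespace Matrix.PosSemidef

variable {k : Type*} [Fintype k] [DecidableEq k] {A : Matrix k k ℂ}

theorem exists_eq_proj_of_trace_sq (hA : A.PosSemidef) (h1 : A.trace = 1)
    (h2 : (A ^ 2).trace = 1) : ∃ ψ : k → ℂ, IsUnitVec ψ ∧ A = proj ψ := by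
  have hA₁ := hA.1.trace_pow_eq_sum_eigenvalues_pow 1
  have hA₂ := hA.1.trace_pow_eq_sum_eigenvalues_pow 2
  simp only [pow_one, h1, h2] at hA₁ hA₂
  obtain ⟨i₀, hi₀⟩ := exists_eq_single_of_sum_eq_one_of_sum_sq_eq_one hA.eigenvalues_nonneg
    (by exact_mod_cast hA₁.symm) (by exact_mod_cast hA₂.symm)
  refine ⟨hA.1.eigenvectorBasis i₀, ?_, ?_⟩
  · rw [IsUnitVec, ← PiLp.norm_sq_eq_of_L2, hA.1.eigenvectorBasis.orthonormal.1 i₀, one_pow]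
  · conv_lhs => rw [hA.1.spectral_theorem, hi₀]
    ext i j
    simp [mul_apply, diagonal, proj, vecMulVec_apply, Pi.single_apply, apply_ite,
      Finset.sum_ite_eq']

theorem eq_inv_card_smul_one_of_trace_pow_three (hA : A.PosSemidef) (h1 : A.trace = 1)
    (h3 : (A ^ 3).trace = ((Fintype.card k : ℂ) ^ 2)⁻¹) :
    A = (Fintype.card k : ℂ)⁻¹ • (1 : Matrix k k ℂ) := by
  have hA₁ := hA.1.trace_pow_eq_sum_eigenvalues_pow 1
  have hA₃ := hA.1.trace_pow_eq_sum_eigenvalues_pow 3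
  simp only [pow_one, h1, h3] at hA₁ hA₃
  have hμ := eq_inv_card_of_sum_eq_one_of_sum_pow_three hA.eigenvalues_nonneg
    (by exact_mod_cast hA₁.symm) (Complex.ofReal_injective (by push_cast at hA₃ ⊢; exact hA₃.symm))
  rw [hA.1.spectral_theorem, show hA.1.eigenvalues = fun _ => _ from funext hμ]
  have hdiag : diagonal (RCLike.ofReal ∘ fun _ : k => (Fintype.card k : ℝ)⁻¹) =
      (Fintype.card k : ℂ)⁻¹ • (1 : Matrix k k ℂ) := by
    simp [smul_one_eq_diagonal, Function.comp_def]
  rw [hdiag, map_smul, map_one]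

end Matrix.PosSemidef

section Proj

variable {k : Type*} [Fintype k]

theorem trace_proj (ψ : k → ℂ) : (proj ψ).trace = ((∑ p, ‖ψ p‖ ^ 2 : ℝ) : ℂ) := by
  simp [proj, trace_vecMulVec, dotProduct, Complex.mul_conj']

theorem isUnitVec_iff_trace_proj (ψ : k → ℂ) : IsUnitVec ψ ↔ (proj ψ).trace = 1 := by
  rw [trace_proj, IsUnitVec]
  exact_mod_cast Iff.rfl

theorem trace_proj_sq [DecidableEq k] (ψ : k → ℂ) : (proj ψ ^ 2).trace = (proj ψ).trace ^ 2 := by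
  rw [sq, proj, vecMulVec_mul_vecMulVec, vecMulVec_smul, trace_smul, trace_vecMulVec, smul_eq_mul,
    dotProduct_comm, sq]

end Proj

theorem trace_conjTranspose_mul_self_sq {ι κ : Type*} [Fintype ι] [Fintype κ] [DecidableEq ι]
    [DecidableEq κ] (M : Matrix ι κ ℂ) : ((Mᴴ * M) ^ 2).trace = ((M * Mᴴ) ^ 2).trace := by
  simp only [sq, ← Matrix.mul_assoc]
  rw [trace_mul_comm]
  simp only [Matrix.mul_assoc]

section PartialTranspose

variable {m n : ℕ}

theorem trace_ptA (ρ : Matrix (Fin m × Fin n) (Fin m × Fin n) ℂ) :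
    (ptA ρ).trace = ρ.trace := rfl

theorem trace_ptA_sq (ρ : Matrix (Fin m × Fin n) (Fin m × Fin n) ℂ) :
    (ptA ρ ^ 2).trace = (ρ ^ 2).trace := by
  simp only [sq, trace, diag, mul_apply, ← Fintype.sum_prod_type']
  -- `(p, q) ↦ ((q.1, p.2), (p.1, q.2))` carries the summands of one side to those of the other
  exact Fintype.sum_equiv (Function.Involutive.toPerm
    (fun x => ((x.2.1, x.1.2), (x.1.1, x.2.2))) fun _ => rfl) _ _ fun _ => rfl

def coeffMatrix (ψ : Fin m × Fin n → ℂ) : Matrix (Fin m) (Fin n) ℂ :=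
  Matrix.of fun i j => ψ (i, j)

theorem ptA_proj_sq (ψ : Fin m × Fin n → ℂ) :
    ptA (proj ψ) ^ 2 =
      ((coeffMatrix ψ * (coeffMatrix ψ)ᴴ) ⊗ₖ ((coeffMatrix ψ)ᴴ * coeffMatrix ψ))ᵀ := by
  ext ⟨i, j⟩ ⟨k, l⟩
  simp only [sq, mul_apply, ptA, proj, vecMulVec_apply, Pi.star_apply, transpose_apply,
    kroneckerMap_apply, coeffMatrix, of_apply, conjTranspose_apply, RCLike.star_def,
    Fintype.sum_prod_type, Finset.sum_mul, Finset.mul_sum]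
  exact Finset.sum_congr rfl fun _ _ => Finset.sum_congr rfl fun _ _ => by ring

theorem trace_kronecker_transpose_mul_ptA_proj (ψ : Fin m × Fin n → ℂ)
    (R : Matrix (Fin m) (Fin m) ℂ) (S : Matrix (Fin n) (Fin n) ℂ) :
    ((R ⊗ₖ S)ᵀ * ptA (proj ψ)).trace = (R * coeffMatrix ψ * S * (coeffMatrix ψ)ᴴ).trace := by
  simp only [trace, diag, mul_apply, ptA, proj, vecMulVec_apply, Pi.star_apply, transpose_apply,
    kroneckerMap_apply, coeffMatrix, of_apply, conjTranspose_apply, RCLike.star_def,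
    Fintype.sum_prod_type, Finset.sum_mul]
  rw [Finset.sum_comm]
  conv_rhs => rw [Finset.sum_comm]
  refine Finset.sum_congr rfl fun _ _ => ?_
  rw [Finset.sum_comm]
  refine Finset.sum_congr rfl fun _ _ => ?_
  rw [Finset.sum_comm]
  exact Finset.sum_congr rfl fun _ _ => Finset.sum_congr rfl fun _ _ => by ring

theorem trace_ptA_proj_pow_three (ψ : Fin m × Fin n → ℂ) :
    (ptA (proj ψ) ^ 3).trace = ((coeffMatrix ψ * (coeffMatrix ψ)ᴴ) ^ 3).trace := by
  rw [pow_succ, ptA_proj_sq, trace_kronecker_transpose_mul_ptA_proj]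
  simp only [pow_succ, pow_zero, Matrix.one_mul, Matrix.mul_assoc]

theorem trace_ptA_proj_pow_four (ψ : Fin m × Fin n → ℂ) :
    (ptA (proj ψ) ^ 4).trace = ((coeffMatrix ψ * (coeffMatrix ψ)ᴴ) ^ 2).trace ^ 2 := by
  rw [show 4 = 2 * 2 from rfl, pow_mul, ptA_proj_sq, ← transpose_pow, trace_transpose,
    sq (_ ⊗ₖ _), ← mul_kronecker_mul, trace_kronecker, ← sq, ← sq,
    trace_conjTranspose_mul_self_sq, sq (trace _)]

theorem trace_coeffMatrix_mul_conjTranspose (ψ : Fin m × Fin n → ℂ) :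
    (coeffMatrix ψ * (coeffMatrix ψ)ᴴ).trace = (proj ψ).trace := by
  simp [trace, mul_apply, proj, vecMulVec_apply, coeffMatrix, Fintype.sum_prod_type]

theorem maxEntangled_iff (ψ : Fin n × Fin n → ℂ) :
    MaxEntangled ψ ↔
      coeffMatrix ψ * (coeffMatrix ψ)ᴴ = (n : ℂ)⁻¹ • (1 : Matrix (Fin n) (Fin n) ℂ) :=
  Iff.rfl

end PartialTranspose

theorem stmt5 (ρ : Matrix (Fin 2 × Fin 2) (Fin 2 × Fin 2) ℂ) (hρ : IsDensityMatrix ρ) :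
    (Matrix.trace (ptA ρ) = 1 ∧ Matrix.trace ((ptA ρ) ^ 2) = 1 ∧
      Matrix.trace ((ptA ρ) ^ 3) = 1/4 ∧ Matrix.trace ((ptA ρ) ^ 4) = 1/4) ↔
      ∃ ψ : Fin 2 × Fin 2 → ℂ, IsUnitVec ψ ∧ MaxEntangled ψ ∧ ρ = proj ψ := by
  obtain ⟨hρpsd, hρtr⟩ := hρ
  constructor
  · rintro ⟨-, h2, h3, -⟩
    obtain ⟨ψ, hψ, rfl⟩ := hρpsd.exists_eq_proj_of_trace_sq hρtr (trace_ptA_sq ρ ▸ h2)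
    have hR := posSemidef_self_mul_conjTranspose (coeffMatrix ψ)
    have hmixed := hR.eq_inv_card_smul_one_of_trace_pow_three
      (by rw [trace_coeffMatrix_mul_conjTranspose, hρtr])
      (by rw [← trace_ptA_proj_pow_three, h3]; norm_num)
    exact ⟨ψ, hψ, (maxEntangled_iff ψ).2 (by simpa using hmixed), rfl⟩
  · rintro ⟨ψ, hψ, hmax, rfl⟩
    rw [isUnitVec_iff_trace_proj] at hψ
    have hR := (maxEntangled_iff ψ).1 hmax
    refine ⟨by rw [trace_ptA, hψ], by rw [trace_ptA_sq, trace_proj_sq, hψ, one_pow], ?_, ?_⟩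
    · rw [trace_ptA_proj_pow_three, hR]
      norm_num [_root_.smul_pow, trace_smul]
    · rw [trace_ptA_proj_pow_four, hR]
      norm_num [_root_.smul_pow, trace_smul]
end
end
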